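/- arXiv:1408.1379 — 5 statements merged into one kernel-verified Lean document; each statement's English description precedes it below -/
import Mathlib

section
/- Let X be a forward invariant compact set for a continuous flow φ^t, and suppose φ_λ ∈ C⁰(X) satisfies φ_λ(φ^t(x)) = e^{λt} φ_λ(x) with Re(λ) < 0. Then the zero level set M₀ = {x ∈ X : φ_λ(x) = 0} is forward invariant, stable, and globally attractive: for all x ∈ X, dist(φ^t(x), M₀) → 0 as t → ∞. -/
/-- The zero level set of a continuous Koopman eigenfunction with `Re λ < 0` is
forward invariant, stable and globally attractive (Theorem 1 of the paper). -/
theorem zero_level_set_stable {N : ℕ}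
    (X : Set (EuclideanSpace ℝ (Fin N)))
    (φflow : ℝ → EuclideanSpace ℝ (Fin N) → EuclideanSpace ℝ (Fin N))
    (hXcomp : IsCompact X)
    (hflowcont : Continuous fun p : ℝ × EuclideanSpace ℝ (Fin N) => φflow p.1 p.2)
    (hXinv : ∀ x ∈ X, ∀ t : ℝ, 0 ≤ t → φflow t x ∈ X)
    (φlam : EuclideanSpace ℝ (Fin N) → ℂ) (lam : ℂ)
    (hφc : ContinuousOn φlam X) (hlam : lam.re < 0)
    (heig : ∀ x ∈ X, ∀ t : ℝ, 0 ≤ t →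
      φlam (φflow t x) = Complex.exp (lam * t) * φlam x) :
    (∀ x ∈ {x ∈ X | φlam x = 0}, ∀ t : ℝ, 0 ≤ t →
        φflow t x ∈ {x ∈ X | φlam x = 0}) ∧
    (∀ ε > 0, ∃ δ > 0, ∀ x ∈ X, Metric.infDist x {x ∈ X | φlam x = 0} < δ →
        ∀ t : ℝ, 0 ≤ t → Metric.infDist (φflow t x) {x ∈ X | φlam x = 0} < ε) ∧
    (∀ x ∈ X, Filter.Tendsto
        (fun t => Metric.infDist (φflow t x) {x ∈ X | φlam x = 0})
        Filter.atTop (nhds 0)) := by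
  set M : Set (EuclideanSpace ℝ (Fin N)) := {x ∈ X | φlam x = 0} with hMdef
  have hinv : ∀ x ∈ M, ∀ t : ℝ, 0 ≤ t → φflow t x ∈ M := by
    intro x hx t ht
    obtain ⟨hxX, hx0⟩ := hx
    exact ⟨hXinv x hxX t ht, by rw [heig x hxX t ht, hx0, mul_zero]⟩
  have hdecay : ∀ x ∈ X, ∀ t : ℝ, 0 ≤ t →
      ‖φlam (φflow t x)‖ = Real.exp (lam.re * t) * ‖φlam x‖ := by
    intro x hx t ht
    rw [heig x hx t ht, norm_mul, Complex.norm_exp]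
    norm_num
  have hle : ∀ x ∈ X, ∀ t : ℝ, 0 ≤ t →
      ‖φlam (φflow t x)‖ ≤ ‖φlam x‖ := by
    intro x hx t ht
    rw [hdecay x hx t ht]
    calc Real.exp (lam.re * t) * ‖φlam x‖
        ≤ 1 * ‖φlam x‖ := by
          apply mul_le_mul_of_nonneg_right _ (norm_nonneg _)
          rw [Real.exp_le_one_iff]
          exact mul_nonpos_of_nonpos_of_nonneg hlam.le ht
      _ = ‖φlam x‖ := one_mul _
  rcases M.eq_empty_or_nonempty with hMe | hMne
  · refine ⟨hinv, ?_, ?_⟩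
    · intro ε hε
      exact ⟨1, one_pos, fun x hx _ t ht => by
        rw [hMe]; simp only [Metric.infDist_empty]; exact hε⟩
    · intro x hx
      simpa [hMe, Metric.infDist_empty] using
        (tendsto_const_nhds : Filter.Tendsto (fun _ : ℝ => (0:ℝ)) Filter.atTop (nhds 0))
  have hA : ∀ ε > 0, ∃ η > 0, ∀ x ∈ X,
      ‖φlam x‖ < η → Metric.infDist x M < ε := by
    intro ε hε
    set K := X ∩ {y | ε ≤ Metric.infDist y M} with hKdef
    have hKc : IsCompact K :=
      hXcomp.inter_right (isClosed_le continuous_const (Metric.continuous_infDist_pt M))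
    rcases K.eq_empty_or_nonempty with hKe | hKne
    · refine ⟨1, one_pos, fun x hxX _ => ?_⟩
      by_contra h
      have hxK : x ∈ K := ⟨hxX, not_lt.mp h⟩
      simp [hKe] at hxK
    · obtain ⟨x₀, hx₀K, hmin⟩ := hKc.exists_isMinOn hKne
        (continuous_norm.comp_continuousOn (hφc.mono Set.inter_subset_left))
      refine ⟨‖φlam x₀‖, ?_, ?_⟩
      · rcases lt_or_eq_of_le (norm_nonneg (φlam x₀)) with h | h
        · exact h
        · exfalso
          have hx₀M : x₀ ∈ M := ⟨hx₀K.1, by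
            have := h.symm
            rwa [norm_eq_zero] at this⟩
          have h0 : Metric.infDist x₀ M = 0 := Metric.infDist_zero_of_mem hx₀M
          have := hx₀K.2
          rw [Set.mem_setOf_eq, h0] at this
          linarith
      · intro x hxX hlt
        by_contra h
        have hxK : x ∈ K := ⟨hxX, not_lt.mp h⟩
        exact absurd (isMinOn_iff.mp hmin x hxK) (not_le.mpr hlt)
  have hB : ∀ η > 0, ∃ δ > 0, ∀ x ∈ X,
      Metric.infDist x M < δ → ‖φlam x‖ < η := by
    intro η hη
    have huc : UniformContinuousOn (fun y => ‖φlam y‖) X :=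
      hXcomp.uniformContinuousOn_of_continuous
        (continuous_norm.comp_continuousOn hφc)
    rw [Metric.uniformContinuousOn_iff] at huc
    obtain ⟨δ, hδ, hd⟩ := huc η hη
    refine ⟨δ, hδ, fun x hxX hlt => ?_⟩
    obtain ⟨y, hyM, hxy⟩ := (Metric.infDist_lt_iff hMne).mp hlt
    have hdd := hd x hxX y hyM.1 hxy
    rw [hyM.2] at hdd
    simpa [Real.dist_eq, abs_of_nonneg (norm_nonneg _)] using hdd
  refine ⟨hinv, ?_, ?_⟩
  · intro ε hε
    obtain ⟨η, hη, hAε⟩ := hA ε hε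
    obtain ⟨δ, hδ, hBη⟩ := hB η hη
    refine ⟨δ, hδ, fun x hxX hxd t ht => ?_⟩
    exact hAε _ (hXinv x hxX t ht)
      (lt_of_le_of_lt (hle x hxX t ht) (hBη x hxX hxd))
  · intro x hxX
    rw [NormedAddCommGroup.tendsto_nhds_zero]
    intro ε hε
    obtain ⟨η, hη, hAε⟩ := hA ε hε
    have h2 : Filter.Tendsto (fun t : ℝ => lam.re * t) Filter.atTop Filter.atBot := by
      have hpos : Filter.Tendsto (fun t : ℝ => (-lam.re) * t) Filter.atTop Filter.atTop :=
        Filter.Tendsto.const_mul_atTop (by linarith) Filter.tendsto_id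
      have h3 := Filter.tendsto_neg_atTop_atBot.comp hpos
      exact h3.congr fun t => by simp [Function.comp]
    have h1 : Filter.Tendsto (fun t : ℝ => Real.exp (lam.re * t) * ‖φlam x‖)
        Filter.atTop (nhds 0) := by
      simpa using (Real.tendsto_exp_atBot.comp h2).mul_const (‖φlam x‖)
    have hev : ∀ᶠ t : ℝ in Filter.atTop,
        Real.exp (lam.re * t) * ‖φlam x‖ < η :=
      h1.eventually_lt_const hη
    filter_upwards [hev, Filter.eventually_ge_atTop (0:ℝ)] with t hlt ht
    rw [Real.norm_eq_abs, abs_of_nonneg Metric.infDist_nonneg]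
    exact hAε _ (hXinv x hxX t ht) (by rw [hdecay x hxX t ht]; exact hlt)
end

section
/- Let X be a forward invariant compact set and φ_{λ₁}, ..., φ_{λ_m} ∈ C⁰(X) be Koopman eigenfunctions with Re(λᵢ) < 0 for all i. Then M = ⋂ᵢ {x ∈ X : φ_{λᵢ}(x) = 0} is forward invariant and globally asymptotically stable in X. -/
/-- The common zero level set of finitely many continuous Koopman eigenfunctions
with eigenvalues of negative real part is forward invariant and globally
asymptotically stable (Corollary 1 of the paper). -/
theorem common_zero_level_set_stable {N m : ℕ}
    (X : Set (EuclideanSpace ℝ (Fin N)))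
    (φflow : ℝ → EuclideanSpace ℝ (Fin N) → EuclideanSpace ℝ (Fin N))
    (hXcomp : IsCompact X)
    (hflowcont : Continuous fun p : ℝ × EuclideanSpace ℝ (Fin N) => φflow p.1 p.2)
    (hXinv : ∀ x ∈ X, ∀ t : ℝ, 0 ≤ t → φflow t x ∈ X)
    (Φ : Fin m → EuclideanSpace ℝ (Fin N) → ℂ) (Λ : Fin m → ℂ)
    (hφc : ∀ i, ContinuousOn (Φ i) X) (hlam : ∀ i, (Λ i).re < 0)
    (heig : ∀ i, ∀ x ∈ X, ∀ t : ℝ, 0 ≤ t →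
      Φ i (φflow t x) = Complex.exp (Λ i * t) * Φ i x) :
    (∀ x ∈ {x ∈ X | ∀ i, Φ i x = 0}, ∀ t : ℝ, 0 ≤ t →
        φflow t x ∈ {x ∈ X | ∀ i, Φ i x = 0}) ∧
    (∀ ε > 0, ∃ δ > 0, ∀ x ∈ X,
        Metric.infDist x {x ∈ X | ∀ i, Φ i x = 0} < δ →
        ∀ t : ℝ, 0 ≤ t →
          Metric.infDist (φflow t x) {x ∈ X | ∀ i, Φ i x = 0} < ε) ∧
    (∀ x ∈ X, (⋂ T : ℝ, closure {y | ∃ t : ℝ, T < t ∧ φflow t x = y})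
        ⊆ {x ∈ X | ∀ i, Φ i x = 0}) := by
  have hXclosed : IsClosed X := hXcomp.isClosed
  have hMsub : {x ∈ X | ∀ i, Φ i x = 0} ⊆ X := fun x hx => hx.1
  have hnorm : ∀ i, ∀ x ∈ X, ∀ t : ℝ, 0 ≤ t →
      ‖Φ i (φflow t x)‖ = Real.exp ((Λ i).re * t) * ‖Φ i x‖ := by
    intro i x hx t ht
    rw [heig i x hx t ht, norm_mul]
    congr 1
    rw [Complex.norm_exp]
    congr 1
    simp [Complex.mul_re]
  set W : EuclideanSpace ℝ (Fin N) → ℝ := fun x => ∑ i, ‖Φ i x‖ with hWdef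
  have hWcont : ContinuousOn W X :=
    continuousOn_finset_sum _ (fun i _ => (hφc i).norm)
  have hWnonneg : ∀ x, 0 ≤ W x := fun x => Finset.sum_nonneg fun i _ => norm_nonneg _
  have hWzero : ∀ x, (W x = 0 ↔ ∀ i, Φ i x = 0) := by
    intro x
    constructor
    · intro h i
      have := (Finset.sum_eq_zero_iff_of_nonneg
        (fun i _ => norm_nonneg (Φ i x))).mp h i (Finset.mem_univ i)
      simpa using this
    · intro h; simp [hWdef, h]
  have hWdec : ∀ x ∈ X, ∀ t : ℝ, 0 ≤ t → W (φflow t x) ≤ W x := by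
    intro x hx t ht
    apply Finset.sum_le_sum
    intro i _
    rw [hnorm i x hx t ht]
    calc Real.exp ((Λ i).re * t) * ‖Φ i x‖ ≤ 1 * ‖Φ i x‖ := by
          apply mul_le_mul_of_nonneg_right _ (norm_nonneg _)
          rw [← Real.exp_zero]
          apply Real.exp_le_exp.mpr
          nlinarith [hlam i]
      _ = ‖Φ i x‖ := one_mul _
  refine ⟨?_, ?_, ?_⟩
  · rintro x ⟨hxX, hx0⟩ t ht
    exact ⟨hXinv x hxX t ht, fun i => by rw [heig i x hxX t ht, hx0 i, mul_zero]⟩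
  · intro ε hε
    rcases Set.eq_empty_or_nonempty {x ∈ X | ∀ i, Φ i x = 0} with hMe | hMne
    · refine ⟨1, one_pos, fun x hx _ t ht => ?_⟩
      rw [hMe]
      simpa [Metric.infDist_empty] using hε
    · obtain ⟨η, hη, hclaim1⟩ : ∃ η > 0, ∀ x ∈ X, W x < η →
          Metric.infDist x {x ∈ X | ∀ i, Φ i x = 0} < ε := by
        set K := {x ∈ X | ε ≤ Metric.infDist x {x ∈ X | ∀ i, Φ i x = 0}} with hK
        have hKcomp : IsCompact K := by
          apply hXcomp.of_isClosed_subset ?_ (fun x hx => hx.1)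
          have : K = X ∩ {x | ε ≤ Metric.infDist x {x ∈ X | ∀ i, Φ i x = 0}} := rfl
          rw [this]
          exact hXclosed.inter (isClosed_le continuous_const (Metric.continuous_infDist_pt _))
        rcases Set.eq_empty_or_nonempty K with hKe | hKne
        · refine ⟨1, one_pos, fun x hx _ => ?_⟩
          by_contra h
          have hxK : x ∈ K := ⟨hx, le_of_not_gt h⟩
          rw [hKe] at hxK
          exact hxK
        · obtain ⟨z, hzK, hzmin⟩ :=
            hKcomp.exists_isMinOn hKne (hWcont.mono (fun x hx => hx.1))
          refine ⟨W z, ?_, ?_⟩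
          · rcases lt_or_eq_of_le (hWnonneg z) with h | h
            · exact h
            · exfalso
              have hzM : z ∈ {x ∈ X | ∀ i, Φ i x = 0} := ⟨hzK.1, (hWzero z).mp h.symm⟩
              have h1 := Metric.infDist_zero_of_mem hzM
              have h2 := hzK.2
              rw [h1] at h2
              linarith
          · intro x hx hWx
            by_contra h
            exact absurd hWx (not_lt.mpr (hzmin ⟨hx, le_of_not_gt h⟩))
      obtain ⟨δ, hδ, hδuc⟩ := (Metric.uniformContinuousOn_iff).mp
        (hXcomp.uniformContinuousOn_of_continuous hWcont) η hη
      refine ⟨δ, hδ, fun x hx hxd t ht => ?_⟩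
      obtain ⟨y, hyM, hxy⟩ := (Metric.infDist_lt_iff hMne).mp hxd
      have hWx : W x < η := by
        have h1 := hδuc x hx y (hMsub hyM) hxy
        have hWy : W y = 0 := (hWzero y).mpr hyM.2
        rw [Real.dist_eq, hWy, sub_zero, abs_of_nonneg (hWnonneg x)] at h1
        exact h1
      exact hclaim1 (φflow t x) (hXinv x hx t ht) (lt_of_le_of_lt (hWdec x hx t ht) hWx)
  · intro x hx y hy
    simp only [Set.mem_iInter] at hy
    have hyX : y ∈ X := by
      have hsub : {y | ∃ t : ℝ, (0:ℝ) < t ∧ φflow t x = y} ⊆ X := by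
        rintro _ ⟨t, ht, rfl⟩; exact hXinv x hx t ht.le
      exact (hXclosed.closure_subset_iff.mpr hsub) (hy 0)
    refine ⟨hyX, fun i => ?_⟩
    have hbound : ∀ T : ℝ, 0 ≤ T → ‖Φ i y‖ ≤ Real.exp ((Λ i).re * T) * ‖Φ i x‖ := by
      intro T hT
      have hne : (nhdsWithin y {y | ∃ t : ℝ, T < t ∧ φflow t x = y}).NeBot :=
        mem_closure_iff_nhdsWithin_neBot.mp (hy T)
      have hsub : {y | ∃ t : ℝ, T < t ∧ φflow t x = y} ⊆ X := by
        rintro _ ⟨t, ht, rfl⟩; exact hXinv x hx t (hT.trans ht.le)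
      have htend : Filter.Tendsto (fun z => ‖Φ i z‖)
          (nhdsWithin y {y | ∃ t : ℝ, T < t ∧ φflow t x = y}) (nhds ‖Φ i y‖) :=
        (((hφc i y hyX).mono hsub).norm : ContinuousWithinAt (fun z => ‖Φ i z‖) _ y)
      refine le_of_tendsto htend ?_
      filter_upwards [self_mem_nhdsWithin] with z hz
      rcases hz with ⟨t, ht, rfl⟩
      rw [hnorm i x hx t (hT.trans ht.le)]
      apply mul_le_mul_of_nonneg_right _ (norm_nonneg _)
      apply Real.exp_le_exp.mpr
      nlinarith [hlam i]
    have hlim : Filter.Tendsto (fun T : ℝ => Real.exp ((Λ i).re * T) * ‖Φ i x‖)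
        Filter.atTop (nhds 0) := by
      rw [show (0:ℝ) = 0 * ‖Φ i x‖ by ring]
      apply Filter.Tendsto.mul_const
      exact Real.tendsto_exp_atBot.comp
        ((Filter.tendsto_const_mul_atBot_of_neg (hlam i)).mpr Filter.tendsto_id)
    have hle : ‖Φ i y‖ ≤ 0 :=
      ge_of_tendsto hlim (Filter.eventually_atTop.mpr ⟨0, fun T hT => hbound T hT⟩)
    exact norm_le_zero_iff.mp hle
end

section
/- Let X ⊆ ℝ^N be connected, forward invariant, and compact for the flow of ẋ = F(x) with fixed point x* ∈ X. If there exist N Koopman eigenfunctions φ_{λ₁}, ..., φ_{λ_N} ∈ C¹(X), with Re(λᵢ) < 0, such that the N vectors ∇φ_{λᵢ}(x*) are nonzero and linearly independent, then x* is globally asymptotically stable in X. -/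
open Filter Set Topology

set_option maxHeartbeats 1000000

/-- Corollary 2 of the paper: if there exist `N` C¹ Koopman eigenfunctions with
eigenvalues of negative real part whose gradients at the fixed point are nonzero
and linearly independent, then the fixed point is globally asymptotically stable
in the connected, forward invariant, compact set `X`. -/
theorem fixed_point_globally_asymptotically_stable {N : ℕ}
    (X : Set (EuclideanSpace ℝ (Fin N)))
    (φflow : ℝ → EuclideanSpace ℝ (Fin N) → EuclideanSpace ℝ (Fin N))
    (hXconn : IsConnected X) (hXcomp : IsCompact X)
    (hflowcont : Continuous fun p : ℝ × EuclideanSpace ℝ (Fin N) => φflow p.1 p.2)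
    (hXinv : ∀ x ∈ X, ∀ t : ℝ, 0 ≤ t → φflow t x ∈ X)
    (xstar : EuclideanSpace ℝ (Fin N)) (hxX : xstar ∈ X)
    (hfix : ∀ t : ℝ, φflow t xstar = xstar)
    (Φ : Fin N → EuclideanSpace ℝ (Fin N) → ℂ) (Λ : Fin N → ℂ)
    (hC1 : ∀ i, ContDiff ℝ 1 (Φ i))
    (hlam : ∀ i, (Λ i).re < 0)
    (heig : ∀ i, ∀ x ∈ X, ∀ t : ℝ, 0 ≤ t →
      Φ i (φflow t x) = Complex.exp (Λ i * t) * Φ i x)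
    (hgradne : ∀ i, fderiv ℝ (Φ i) xstar ≠ 0)
    (hgradindep : LinearIndependent ℂ
      (fun i : Fin N =>
        (fun j : Fin N => fderiv ℝ (Φ i) xstar (EuclideanSpace.single j (1 : ℝ))))) :
    (∀ ε > 0, ∃ δ > 0, ∀ x ∈ X, dist x xstar < δ →
        ∀ t : ℝ, 0 ≤ t → dist (φflow t x) xstar < ε) ∧
    (∀ x ∈ X, Filter.Tendsto (fun t => φflow t x) Filter.atTop (nhds xstar)) := by
  classical
  set Ψ : EuclideanSpace ℝ (Fin N) → (Fin N → ℂ) := fun y i => Φ i y with hΨdef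
  have hΨcont : Continuous Ψ := continuous_pi fun i => (hC1 i).continuous
  -- the eigenfunctions vanish at the fixed point
  have hzero : ∀ i, Φ i xstar = 0 := by
    intro i
    have h1 := heig i xstar hxX 1 zero_le_one
    rw [hfix 1] at h1
    have hne : Complex.exp (Λ i * ((1:ℝ):ℂ)) ≠ 1 := by
      intro h
      have h2 : ‖Complex.exp (Λ i * ((1:ℝ):ℂ))‖ = 1 := by rw [h, norm_one]
      rw [Complex.norm_exp] at h2
      have h3 : (Λ i * ((1:ℝ):ℂ)).re = 0 := by
        have h4 := congrArg Real.log h2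
        rwa [Real.log_exp, Real.log_one] at h4
      simp [Complex.mul_re] at h3
      linarith [hlam i]
    have h4 : (Complex.exp (Λ i * ((1:ℝ):ℂ)) - 1) * Φ i xstar = 0 := by
      linear_combination -h1
    rcases mul_eq_zero.mp h4 with h5 | h5
    · exact absurd (sub_eq_zero.mp h5) hne
    · exact h5
  have hΨzero : Ψ xstar = 0 := funext fun i => hzero i
  -- decay of eigenfunctions along the flow
  have hnorm : ∀ i, ∀ x ∈ X, ∀ t : ℝ, 0 ≤ t →
      ‖Φ i (φflow t x)‖ = Real.exp ((Λ i).re * t) * ‖Φ i x‖ := by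
    intro i x hx t ht
    rw [heig i x hx t ht, norm_mul, Complex.norm_exp]
    congr 2
    simp [Complex.mul_re]
  have hle : ∀ i, ∀ x ∈ X, ∀ t : ℝ, 0 ≤ t → ‖Φ i (φflow t x)‖ ≤ ‖Φ i x‖ := by
    intro i x hx t ht
    rw [hnorm i x hx t ht]
    have hexp : Real.exp ((Λ i).re * t) ≤ 1 := by
      rw [← Real.exp_zero]
      exact Real.exp_le_exp.mpr (mul_nonpos_of_nonpos_of_nonneg (hlam i).le ht)
    nlinarith [norm_nonneg (Φ i x)]
  -- the derivative of Ψ at xstar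
  set D : EuclideanSpace ℝ (Fin N) →L[ℝ] (Fin N → ℂ) :=
    ContinuousLinearMap.pi (fun i => fderiv ℝ (Φ i) xstar) with hDdef
  have hD : HasFDerivAt Ψ D xstar :=
    hasFDerivAt_pi.mpr fun i => ((hC1 i).differentiable one_ne_zero).differentiableAt.hasFDerivAt
  -- D is injective
  have hinj : Function.Injective D := by
    have hker : ∀ v, D v = 0 → v = 0 := by
      intro v hv
      have hM : Function.Injective
          (Matrix.of fun i j =>
            fderiv ℝ (Φ i) xstar (EuclideanSpace.single j (1 : ℝ))).mulVec :=
        Matrix.mulVec_injective_iff_isUnit.mpr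
          (Matrix.linearIndependent_rows_iff_isUnit.mp hgradindep)
      have hVdec : ∑ j, v j • EuclideanSpace.single j (1 : ℝ) = v := by
        have hb := Module.Basis.sum_repr (PiLp.basisFun 2 ℝ (Fin N)) v
        simp only [PiLp.basisFun_repr, PiLp.basisFun_apply] at hb
        exact hb
      have hsum : ∀ i, ∑ j,
          fderiv ℝ (Φ i) xstar (EuclideanSpace.single j (1 : ℝ)) * (v j : ℂ) = 0 := by
        intro i
        have hvi : fderiv ℝ (Φ i) xstar v = 0 := congrFun hv i
        rw [← hVdec, map_sum] at hvi
        simp only [map_smul] at hvi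
        calc ∑ j, fderiv ℝ (Φ i) xstar (EuclideanSpace.single j (1 : ℝ)) * (v j : ℂ)
            = ∑ j, v j • fderiv ℝ (Φ i) xstar (EuclideanSpace.single j (1 : ℝ)) := by
              refine Finset.sum_congr rfl fun j _ => ?_
              rw [Complex.real_smul, mul_comm]
          _ = 0 := hvi
      have hu : (fun j => (v j : ℂ)) = 0 := by
        apply hM
        rw [Matrix.mulVec_zero]
        funext i
        exact hsum i
      have hvj : ∀ j, v j = 0 := by
        intro j
        have h := congrFun hu j
        rw [Pi.zero_apply] at h
        exact_mod_cast h
      exact PiLp.ext hvj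
    intro u w huw
    have := hker (u - w) (by rw [map_sub, huw, sub_self])
    exact sub_eq_zero.mp this
  -- antilipschitz lower bound on D
  obtain ⟨K, hK0, hK⟩ :=
    (D : EuclideanSpace ℝ (Fin N) →ₗ[ℝ] (Fin N → ℂ)).exists_antilipschitzWith
      (LinearMap.ker_eq_bot.mpr hinj)
  have hKpos : (0 : ℝ) < (K : ℝ) := hK0
  set c : ℝ := (2 * (K : ℝ))⁻¹ with hcdef
  have hc0 : 0 < c := by positivity
  have hDlow : ∀ v, 2 * c * ‖v‖ ≤ ‖D v‖ := by
    intro v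
    have h := hK.le_mul_dist v 0
    simp only [dist_zero_right, map_zero, ContinuousLinearMap.coe_coe] at h
    have h2c : 2 * c = ((K : ℝ))⁻¹ := by rw [hcdef, mul_inv]; field_simp
    rw [h2c, inv_mul_le_iff₀ hKpos]
    exact h
  -- local lower bound on ‖Ψ‖ near xstar
  have hlo := hD.isLittleO.def hc0
  rw [Metric.eventually_nhds_iff] at hlo
  obtain ⟨r, hr0, hr⟩ := hlo
  have hlow : ∀ y, dist y xstar < r → c * dist y xstar ≤ ‖Ψ y‖ := by
    intro y hy
    have h1 := hr hy
    rw [hΨzero, sub_zero] at h1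
    have h2 : ‖D (y - xstar)‖ ≤ ‖Ψ y‖ + ‖Ψ y - D (y - xstar)‖ := by
      have h3 := norm_sub_le (Ψ y) (Ψ y - D (y - xstar))
      simpa using h3
    rw [dist_eq_norm]
    linarith [h1, h2, hDlow (y - xstar)]
  constructor
  · -- stability
    intro ε hε
    set ε' : ℝ := min ε r / 2 with hε'def
    have hminpos : 0 < min ε r := lt_min hε hr0
    have hε'0 : 0 < ε' := by positivity
    have hε'r : ε' < r := by
      have := min_le_right ε r
      rw [hε'def]; linarith
    have hε'ε : ε' < ε := by
      have := min_le_left ε r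
      rw [hε'def]; linarith
    set m : ℝ := c * ε' with hmdef
    have hm0 : 0 < m := mul_pos hc0 hε'0
    have hcontat : ContinuousAt Ψ xstar := hΨcont.continuousAt
    rw [Metric.continuousAt_iff] at hcontat
    obtain ⟨δ₁, hδ₁0, hδ₁⟩ := hcontat m hm0
    have hφ0 : Continuous fun y => φflow 0 y :=
      hflowcont.comp (continuous_const.prodMk continuous_id)
    have h0at : ContinuousAt (fun y => φflow 0 y) xstar := hφ0.continuousAt
    rw [Metric.continuousAt_iff] at h0at
    obtain ⟨δ₂, hδ₂0, hδ₂⟩ := h0at ε' hε'0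
    refine ⟨min δ₁ δ₂, lt_min hδ₁0 hδ₂0, fun x hxmem hxd t ht => ?_⟩
    by_contra hcon
    push_neg at hcon
    have hfcont : ContinuousOn (fun s => dist (φflow s x) xstar) (Icc 0 t) :=
      ((hflowcont.comp (continuous_id.prodMk continuous_const)).dist
        continuous_const).continuousOn
    have hf0 : dist (φflow 0 x) xstar < ε' := by
      have h := hδ₂ (lt_of_lt_of_le hxd (min_le_right _ _))
      rwa [hfix 0] at h
    have hmem : ε' ∈ Icc (dist (φflow 0 x) xstar) (dist (φflow t x) xstar) :=
      ⟨hf0.le, le_trans hε'ε.le hcon⟩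
    obtain ⟨s, hs, hse⟩ := intermediate_value_Icc ht hfcont hmem
    have hse' : dist (φflow s x) xstar = ε' := hse
    have hge : m ≤ ‖Ψ (φflow s x)‖ := by
      have h := hlow (φflow s x) (by rw [hse']; exact hε'r)
      rw [hse'] at h
      exact h
    have hltm : ‖Ψ (φflow s x)‖ < m := by
      rw [pi_norm_lt_iff hm0]
      intro i
      calc ‖Ψ (φflow s x) i‖ = ‖Φ i (φflow s x)‖ := rfl
        _ ≤ ‖Φ i x‖ := hle i x hxmem s hs.1
        _ ≤ ‖Ψ x‖ := norm_le_pi_norm (Ψ x) i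
        _ < m := by
            have h := hδ₁ (lt_of_lt_of_le hxd (min_le_left _ _))
            rwa [hΨzero, dist_zero_right] at h
    exact absurd hge (not_le.mpr hltm)
  · -- global attraction
    intro x hx
    rcases isEmpty_or_nonempty (Fin N) with hN | hN
    · haveI := hN
      have hsub : ∀ t : ℝ, φflow t x = xstar := by
        intro t
        refine eq_of_dist_eq_zero ?_
        rw [EuclideanSpace.dist_eq]
        simp
      simp only [hsub]
      exact tendsto_const_nhds
    · rw [Metric.tendsto_atTop]
      intro ε hε
      set ε' : ℝ := min ε r / 2 with hε'def
      have hminpos : 0 < min ε r := lt_min hε hr0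
      have hε'0 : 0 < ε' := by positivity
      have hε'r : ε' < r := by
        have := min_le_right ε r
        rw [hε'def]; linarith
      have hε'ε : ε' < ε := by
        have := min_le_left ε r
        rw [hε'def]; linarith
      set m : ℝ := c * ε' with hmdef
      have hm0 : 0 < m := mul_pos hc0 hε'0
      obtain ⟨M, hM⟩ := hXcomp.exists_bound_of_continuousOn hΨcont.continuousOn
      set M' : ℝ := max M 0 with hM'def
      have hM'0 : (0 : ℝ) ≤ M' := le_max_right _ _
      set a : ℝ := Finset.univ.inf' Finset.univ_nonempty (fun i => -(Λ i).re) with hadef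
      have ha0 : 0 < a := by
        rw [hadef, Finset.lt_inf'_iff]
        exact fun i _ => neg_pos.mpr (hlam i)
      have hai : ∀ i, (Λ i).re ≤ -a := by
        intro i
        have h : a ≤ -(Λ i).re := Finset.inf'_le _ (Finset.mem_univ i)
        linarith
      have htend : Tendsto (fun t : ℝ => Real.exp (-(a * t)) * M') atTop (𝓝 0) := by
        have h1 : Tendsto (fun t : ℝ => a * t) atTop atTop :=
          Tendsto.const_mul_atTop ha0 tendsto_id
        have h2 : Tendsto (fun t : ℝ => -(a * t)) atTop atBot :=
          tendsto_neg_atTop_atBot.comp h1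
        have h3 := Real.tendsto_exp_atBot.comp h2
        have h4 := h3.mul_const M'
        simpa using h4
      have hev : ∀ᶠ t in atTop, Real.exp (-(a * t)) * M' < m :=
        htend.eventually (gt_mem_nhds hm0)
      obtain ⟨T, hT⟩ := eventually_atTop.mp (hev.and (eventually_ge_atTop 0))
      refine ⟨T, fun t htT => ?_⟩
      obtain ⟨hTm, hT0⟩ := hT t htT
      by_contra hcon
      push_neg at hcon
      have hgcont : ContinuousOn (fun y => dist (φflow t y) xstar) X :=
        ((hflowcont.comp (continuous_const.prodMk continuous_id)).dist
          continuous_const).continuousOn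
      have hivt := hXconn.isPreconnected.intermediate_value hxX hx hgcont
      have hmem : ε' ∈ Icc (dist (φflow t xstar) xstar) (dist (φflow t x) xstar) := by
        rw [hfix t, dist_self]
        exact ⟨hε'0.le, le_trans hε'ε.le hcon⟩
      obtain ⟨y, hyX, hy⟩ := hivt hmem
      have hy' : dist (φflow t y) xstar = ε' := hy
      have hge : m ≤ ‖Ψ (φflow t y)‖ := by
        have h := hlow (φflow t y) (by rw [hy']; exact hε'r)
        rw [hy'] at h
        exact h
      have hltm : ‖Ψ (φflow t y)‖ < m := by
        rw [pi_norm_lt_iff hm0]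
        intro i
        have h1 : ‖Φ i (φflow t y)‖ = Real.exp ((Λ i).re * t) * ‖Φ i y‖ :=
          hnorm i y hyX t hT0
        have h2 : ‖Φ i y‖ ≤ M' :=
          le_trans (le_trans (norm_le_pi_norm (Ψ y) i) (hM y hyX)) (le_max_left _ _)
        have h3 : Real.exp ((Λ i).re * t) ≤ Real.exp (-(a * t)) := by
          apply Real.exp_le_exp.mpr
          have := hai i
          nlinarith
        calc ‖Ψ (φflow t y) i‖ = Real.exp ((Λ i).re * t) * ‖Φ i y‖ := h1
          _ ≤ Real.exp (-(a * t)) * M' :=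
              mul_le_mul h3 h2 (norm_nonneg _) (Real.exp_nonneg _)
          _ < m := hTm
      exact absurd hge (not_le.mpr hltm)
end

section
/- Let φ_{λ₁}, ..., φ_{λ_N} be Koopman eigenfunctions with Re(λᵢ) < 0, and let λ₁ be the eigenvalue with Re(λ₁) maximal (closest to the imaginary axis). Then the function V(x) = (Σᵢ |φ_{λᵢ}(x)|^p)^{1/p}, p ≥ 1 an integer, satisfies V(φ^t(x)) ≤ e^{Re(λ₁) t} V(x) for all t ≥ 0 and x ∈ X; in particular, V is strictly decreasing along trajectories wherever V(x) > 0. -/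
/-- The function `V(x) = (Σᵢ |φ_{λᵢ}(x)|^p)^{1/p}` built from Koopman
eigenfunctions with `Re λᵢ < 0` is a Lyapunov function: it decays at rate
`e^{Re(λ₁) t}` along trajectories, where `λ₁` has maximal real part. -/
theorem koopman_lyapunov_function {X : Type*} {N : ℕ}
    (φflow : ℝ → X → X)
    (Φ : Fin (N + 1) → X → ℂ) (Λ : Fin (N + 1) → ℂ)
    (hlam : ∀ i, (Λ i).re < 0)
    (hmax : ∀ i, (Λ i).re ≤ (Λ 0).re)
    (heig : ∀ i, ∀ t : ℝ, 0 ≤ t → ∀ x,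
      Φ i (φflow t x) = Complex.exp (Λ i * t) * Φ i x)
    (p : ℕ) (hp : 1 ≤ p)
    (V : X → ℝ)
    (hV : ∀ x, V x = (∑ i, (‖Φ i x‖) ^ p) ^ ((1 : ℝ) / p)) :
    (∀ t : ℝ, 0 ≤ t → ∀ x, V (φflow t x) ≤ Real.exp ((Λ 0).re * t) * V x) ∧
    (∀ t : ℝ, 0 < t → ∀ x, 0 < V x → V (φflow t x) < V x) := by
  have hpne : (p : ℝ) ≠ 0 := by positivity
  have key : ∀ t : ℝ, 0 ≤ t → ∀ x, V (φflow t x) ≤ Real.exp ((Λ 0).re * t) * V x := by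
    intro t ht x
    set c : ℝ := Real.exp ((Λ 0).re * t) with hc
    have hc0 : 0 ≤ c := le_of_lt (Real.exp_pos _)
    have hsum : ∑ i, (‖Φ i (φflow t x)‖) ^ p ≤
        c ^ p * ∑ i, (‖Φ i x‖) ^ p := by
      rw [Finset.mul_sum]
      apply Finset.sum_le_sum
      intro i _
      rw [heig i t ht x, norm_mul, Complex.norm_exp]
      have hre : (Λ i * t).re = (Λ i).re * t := by
        simp [Complex.mul_re]
      rw [hre, mul_pow]
      gcongr
      exact Real.exp_le_exp.mpr (mul_le_mul_of_nonneg_right (hmax i) ht)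
    rw [hV, hV]
    calc (∑ i, (‖Φ i (φflow t x)‖) ^ p) ^ ((1 : ℝ) / p)
        ≤ (c ^ p * ∑ i, (‖Φ i x‖) ^ p) ^ ((1 : ℝ) / p) := by
          apply Real.rpow_le_rpow (by positivity) hsum (by positivity)
      _ = c * (∑ i, (‖Φ i x‖) ^ p) ^ ((1 : ℝ) / p) := by
          rw [Real.mul_rpow (by positivity) (by positivity),
            ← Real.rpow_natCast c p, ← Real.rpow_mul hc0]
          rw [mul_one_div, div_self hpne, Real.rpow_one]
  refine ⟨key, fun t ht x hVx => ?_⟩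
  calc V (φflow t x) ≤ Real.exp ((Λ 0).re * t) * V x := key t ht.le x
    _ < 1 * V x := by
        apply mul_lt_mul_of_pos_right _ hVx
        rw [Real.exp_lt_one_iff]
        exact mul_neg_of_neg_of_pos (hlam 0) ht
    _ = V x := one_mul _
end

section
/- Suppose φ_λ ∈ C⁰(X) is a Koopman eigenfunction with Re(λ) < 0 and the sublevel set X₀ = {x ∈ X : |φ_λ(x)| < α} satisfies X₀ ∩ ∂X = ∅, where X is compact. Then X₀ is forward invariant under the flow restricted to times before trajectories leave X; in particular, if the flow is defined on all of X, every trajectory starting in X₀ remains in X₀ for all t ≥ 0. -/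
/-- If the sublevel set `X₀ = {x ∈ X : |φ_λ(x)| < α}` does not meet the boundary
of the compact set `X`, then trajectories starting in `X₀` remain in `X₀` (and in
particular in `X`) for all positive times. -/
theorem sublevel_set_trapping {N : ℕ}
    (X : Set (EuclideanSpace ℝ (Fin N)))
    (φflow : ℝ → EuclideanSpace ℝ (Fin N) → EuclideanSpace ℝ (Fin N))
    (hXcomp : IsCompact X)
    (hflowcont : Continuous fun p : ℝ × EuclideanSpace ℝ (Fin N) => φflow p.1 p.2)
    (h0 : ∀ x, φflow 0 x = x)
    (φlam : EuclideanSpace ℝ (Fin N) → ℂ) (lam : ℂ) (α : ℝ)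
    (hφc : ContinuousOn φlam X) (hlam : lam.re < 0)
    (heig : ∀ x ∈ X, ∀ t : ℝ, 0 ≤ t → (∀ s ∈ Set.Icc (0 : ℝ) t, φflow s x ∈ X) →
      φlam (φflow t x) = Complex.exp (lam * t) * φlam x)
    (hbdry : {x ∈ X | ‖φlam x‖ < α} ∩ frontier X = ∅) :
    ∀ x ∈ X, ‖φlam x‖ < α → ∀ t : ℝ, 0 ≤ t →
      φflow t x ∈ X ∧ ‖φlam (φflow t x)‖ < α := by
  set X₀ : Set (EuclideanSpace ℝ (Fin N)) := {x ∈ X | ‖φlam x‖ < α} with hX₀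
  have hX₀X : X₀ ⊆ X := fun y hy => hy.1
  -- X₀ is open
  have hX₀int : X₀ ⊆ interior X := by
    intro y hy
    have hycl : y ∈ closure X := subset_closure hy.1
    have : y ∉ frontier X := by
      intro hf
      have : y ∈ X₀ ∩ frontier X := ⟨hy, hf⟩
      rw [hbdry] at this
      exact this
    rcases (closure_eq_interior_union_frontier X ▸ hycl) with h | h
    · exact h
    · exact absurd h this
  obtain ⟨U, hUopen, hU⟩ : ∃ U, IsOpen U ∧ φlam ⁻¹' ((fun z : ℂ => ‖z‖) ⁻¹' Set.Iio α) ∩ X = U ∩ X := by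
    exact continuousOn_iff'.mp hφc _ ((isOpen_Iio).preimage continuous_norm)
  have hX₀eq : X₀ = U ∩ X := by
    rw [← hU]
    ext y
    simp only [hX₀, Set.mem_inter_iff, Set.mem_preimage, Set.mem_Iio, Set.mem_setOf_eq]
    tauto
  have hX₀open : IsOpen X₀ := by
    have h1 : X₀ = U ∩ interior X := by
      apply Set.Subset.antisymm
      · intro y hy
        exact ⟨(hX₀eq ▸ hy).1, hX₀int hy⟩
      · intro y hy
        rw [hX₀eq]
        exact ⟨hy.1, interior_subset hy.2⟩
    rw [h1]
    exact hUopen.inter isOpen_interior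
  intro x hx hxα t ht
  have hcC : Continuous fun s : ℝ => φflow s x :=
    hflowcont.comp (continuous_id.prodMk continuous_const)
  set c : ℝ → EuclideanSpace ℝ (Fin N) := fun s => φflow s x with hc
  have hx0 : c 0 ∈ X₀ := by
    simp only [hc, h0]
    exact ⟨hx, hxα⟩
  set S : Set ℝ := {s : ℝ | 0 ≤ s ∧ c s ∉ X₀} with hS
  have hSclosed : IsClosed S := by
    have : S = Set.Ici (0:ℝ) ∩ c ⁻¹' X₀ᶜ := by
      ext s; simp [hS, Set.mem_Ici]
    rw [this]
    exact isClosed_Ici.inter (hX₀open.isClosed_compl.preimage hcC)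
  have hSempty : S = ∅ := by
    by_contra hne
    have hSne : S.Nonempty := Set.nonempty_iff_ne_empty.mpr hne
    have hSbdd : BddBelow S := ⟨0, fun s hs => hs.1⟩
    set τ := sInf S with hτ
    have hτS : τ ∈ S := hSclosed.csInf_mem hSne hSbdd
    have hτ0 : 0 ≤ τ := hτS.1
    have h0S : (0:ℝ) ∉ S := fun h => h.2 hx0
    have hτpos : 0 < τ := lt_of_le_of_ne hτ0 (fun h => h0S (h ▸ hτS))
    have hbefore : ∀ s ∈ Set.Ico (0:ℝ) τ, c s ∈ X₀ := by
      intro s hs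
      by_contra hcs
      exact absurd (csInf_le hSbdd ⟨hs.1, hcs⟩) (not_le.mpr hs.2)
    -- c τ ∈ X
    have hcτX : c τ ∈ X := by
      have hclos : τ ∈ closure (Set.Ico (0:ℝ) τ) := by
        rw [closure_Ico (ne_of_lt hτpos)]
        exact Set.right_mem_Icc.mpr hτ0
      have := (hcC.continuousWithinAt (s := Set.Ico 0 τ) (x := τ)).mem_closure_image hclos
      have himg : c '' Set.Ico 0 τ ⊆ X := by
        rintro _ ⟨s, hs, rfl⟩
        exact hX₀X (hbefore s hs)
      exact hXcomp.isClosed.closure_subset_iff.mpr himg this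
    have hIcc : ∀ s ∈ Set.Icc (0:ℝ) τ, φflow s x ∈ X := by
      intro s hs
      rcases lt_or_eq_of_le hs.2 with h | h
      · exact hX₀X (hbefore s ⟨hs.1, h⟩)
      · rw [h]; exact hcτX
    have heq := heig x hx τ hτ0 hIcc
    have habs : ‖φlam (c τ)‖ < α := by
      have : ‖φlam (c τ)‖ = Real.exp (lam.re * τ) * ‖φlam x‖ := by
        simp only [hc, heq, norm_mul, Complex.norm_exp]
        congr 2
        simp [Complex.mul_re]
      rw [this]
      calc Real.exp (lam.re * τ) * ‖φlam x‖
          ≤ 1 * ‖φlam x‖ := by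
            apply mul_le_mul_of_nonneg_right _ (norm_nonneg _)
            rw [← Real.exp_zero]
            exact Real.exp_le_exp.mpr (mul_nonpos_of_nonpos_of_nonneg hlam.le hτ0)
        _ = ‖φlam x‖ := one_mul _
        _ < α := hxα
    exact hτS.2 ⟨hcτX, habs⟩
  have : t ∉ S := by rw [hSempty]; exact Set.notMem_empty t
  simp only [hS, Set.mem_setOf_eq, not_and, not_not] at this
  exact this ht
end
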